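/- arXiv:1605.01071 — 4 statements merged into one kernel-verified Lean document; each statement's English description precedes it below -/
import Mathlib

section
/- Let ω : ℝ → ℝ be continuous and let v₁, v₂ : ℝ → ℝ be twice differentiable solutions of y'' + ω(t)²·y = 0 whose Wronskian W = v₁·v₂' − v₁'·v₂ is a nonzero constant. Let A, B, C be real constants satisfying (A·C − B²)·W² = 1. Then on any interval where ρ(t) := √(A·v₁(t)² + 2B·v₁(t)·v₂(t) + C·v₂(t)²) is strictly positive, ρ is twice differentiable and satisfies the Ermakov–Pinney equation ρ'' + ω(t)²·ρ = 1/ρ³. -/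
/-!
With `q := A v₁² + 2B v₁v₂ + C v₂²` one has `q' = 2p` for the polar form
`p := A v₁v₁' + B(v₁v₂' + v₁'v₂) + C v₂v₂'`, and, by the oscillator equation,
`p' = S − ω² q` with `S := A v₁'² + 2B v₁'v₂' + C v₂'²`. For `ρ = √q` this gives
`ρ'' = (q p' − p²)/ρ³ = (q S − p²)/ρ³ − ω² ρ`, and the Lagrange-type identity
`q S − p² = (AC − B²) W²` for binary quadratic forms makes the numerator `1`.
-/

open Filter Topology

section BinaryForm

variable (A B C : ℝ)

def binaryQuad (x y : ℝ) : ℝ := A * x ^ 2 + 2 * B * x * y + C * y ^ 2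

def binaryPolar (x₁ y₁ x₂ y₂ : ℝ) : ℝ := A * x₁ * x₂ + B * (x₁ * y₂ + y₁ * x₂) + C * y₁ * y₂

theorem binaryPolar_self (x y : ℝ) : binaryPolar A B C x y x y = binaryQuad A B C x y := by
  unfold binaryPolar binaryQuad; ring

theorem binaryPolar_mul_right (c x₁ y₁ x₂ y₂ : ℝ) :
    binaryPolar A B C x₁ y₁ (c * x₂) (c * y₂) = c * binaryPolar A B C x₁ y₁ x₂ y₂ := by
  unfold binaryPolar; ring

theorem binaryQuad_mul_binaryQuad_sub_binaryPolar_sq (x₁ y₁ x₂ y₂ : ℝ) :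
    binaryQuad A B C x₁ y₁ * binaryQuad A B C x₂ y₂ - binaryPolar A B C x₁ y₁ x₂ y₂ ^ 2 =
      (A * C - B ^ 2) * (x₁ * y₂ - x₂ * y₁) ^ 2 := by
  unfold binaryQuad binaryPolar; ring

variable {f g h k : ℝ → ℝ} {f' g' h' k' t : ℝ}

theorem HasDerivAt.binaryQuad (hf : HasDerivAt f f' t) (hg : HasDerivAt g g' t) :
    HasDerivAt (fun s => binaryQuad A B C (f s) (g s)) (2 * binaryPolar A B C (f t) (g t) f' g') t := by
  have H := (((hf.fun_pow 2).const_mul A).fun_add ((hf.fun_mul hg).const_mul (2 * B))).fun_add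
    ((hg.fun_pow 2).const_mul C)
  refine (H.congr_deriv ?_).congr_of_eventuallyEq (Eventually.of_forall fun s => ?_)
  · simp only [_root_.binaryPolar]; push_cast; ring
  · simp only [_root_.binaryQuad]; ring

theorem HasDerivAt.binaryPolar (hf : HasDerivAt f f' t) (hg : HasDerivAt g g' t)
    (hh : HasDerivAt h h' t) (hk : HasDerivAt k k' t) :
    HasDerivAt (fun s => binaryPolar A B C (f s) (g s) (h s) (k s))
      (binaryPolar A B C f' g' (h t) (k t) + binaryPolar A B C (f t) (g t) h' k') t := by
  have H := (((hf.fun_mul hh).const_mul A).fun_add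
    (((hf.fun_mul hk).fun_add (hg.fun_mul hh)).const_mul B)).fun_add ((hg.fun_mul hk).const_mul C)
  refine (H.congr_deriv ?_).congr_of_eventuallyEq (Eventually.of_forall fun s => ?_)
  · simp only [_root_.binaryPolar]; ring
  · simp only [_root_.binaryPolar]; ring

end BinaryForm

theorem hasDerivAt_deriv_sqrt {q p : ℝ → ℝ} {p' t : ℝ}
    (hq : ∀ᶠ s in 𝓝 t, HasDerivAt q (2 * p s) s) (hp : HasDerivAt p p' t) (ht : 0 < q t) :
    HasDerivAt (deriv fun s => √(q s)) ((q t * p' - p t ^ 2) / √(q t) ^ 3) t := by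
  have hderiv : ∀ s, HasDerivAt q (2 * p s) s → 0 < q s →
      HasDerivAt (fun s => √(q s)) (p s / √(q s)) s := by
    intro s hqs hpos
    convert hqs.sqrt hpos.ne' using 1
    field_simp
  have hpos : ∀ᶠ s in 𝓝 t, 0 < q s :=
    hq.self_of_nhds.continuousAt.eventually (eventually_gt_nhds ht)
  have heq : (deriv fun s => √(q s)) =ᶠ[𝓝 t] fun s => p s / √(q s) :=
    (hq.and hpos).mono fun s ⟨hqs, hposs⟩ => (hderiv s hqs hposs).deriv
  have hroot : 0 < √(q t) := Real.sqrt_pos.mpr ht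
  have hsq : √(q t) ^ 2 = q t := Real.sq_sqrt ht.le
  refine ((hp.div (hderiv t hq.self_of_nhds ht) hroot.ne').congr_of_eventuallyEq heq).congr_deriv ?_
  field_simp
  rw [hsq]

theorem ermakovPinney_sqrt {q p S : ℝ → ℝ} {ω t : ℝ}
    (hq : ∀ᶠ s in 𝓝 t, HasDerivAt q (2 * p s) s) (hp : HasDerivAt p (S t - ω ^ 2 * q t) t)
    (hinv : q t * S t - p t ^ 2 = 1) (ht : 0 < q t) :
    deriv (deriv fun s => √(q s)) t + ω ^ 2 * √(q t) = 1 / √(q t) ^ 3 := by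
  have hroot : 0 < √(q t) := Real.sqrt_pos.mpr ht
  have hsq : √(q t) ^ 2 = q t := Real.sq_sqrt ht.le
  rw [(hasDerivAt_deriv_sqrt hq hp ht).deriv, ← hinv]
  field_simp
  linear_combination ω ^ 2 * (√(q t) ^ 2 + q t) * hsq

theorem stmt0_general (ω v₁ v₂ : ℝ → ℝ)
    (hv₁ : Differentiable ℝ v₁) (hv₁' : Differentiable ℝ (deriv v₁))
    (hv₂ : Differentiable ℝ v₂) (hv₂' : Differentiable ℝ (deriv v₂))
    (heq₁ : ∀ t, deriv (deriv v₁) t + ω t ^ 2 * v₁ t = 0)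
    (heq₂ : ∀ t, deriv (deriv v₂) t + ω t ^ 2 * v₂ t = 0)
    (W : ℝ)
    (hWconst : ∀ t, v₁ t * deriv v₂ t - deriv v₁ t * v₂ t = W)
    (A B C : ℝ) (hABC : (A * C - B ^ 2) * W ^ 2 = 1)
    (ρ : ℝ → ℝ)
    (hρ : ∀ t, ρ t = Real.sqrt (A * v₁ t ^ 2 + 2 * B * v₁ t * v₂ t + C * v₂ t ^ 2)) :
    ∀ t, 0 < ρ t →
      DifferentiableAt ℝ ρ t ∧ DifferentiableAt ℝ (deriv ρ) t ∧
        deriv (deriv ρ) t + ω t ^ 2 * ρ t = 1 / ρ t ^ 3 := by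
  intro t ht
  obtain rfl : ρ = fun s => √(binaryQuad A B C (v₁ s) (v₂ s)) := funext hρ
  set q := fun s => binaryQuad A B C (v₁ s) (v₂ s)
  set p := fun s => binaryPolar A B C (v₁ s) (v₂ s) (deriv v₁ s) (deriv v₂ s)
  set S := fun s => binaryQuad A B C (deriv v₁ s) (deriv v₂ s)
  have hq (s : ℝ) : HasDerivAt q (2 * p s) s :=
    (hv₁ s).hasDerivAt.binaryQuad A B C (hv₂ s).hasDerivAt
  have hp : HasDerivAt p (S t - ω t ^ 2 * q t) t := by
    have e₁ : deriv (deriv v₁) t = -ω t ^ 2 * v₁ t := by linarith [heq₁ t]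
    have e₂ : deriv (deriv v₂) t = -ω t ^ 2 * v₂ t := by linarith [heq₂ t]
    refine ((hv₁ t).hasDerivAt.binaryPolar A B C (hv₂ t).hasDerivAt (hv₁' t).hasDerivAt
      (hv₂' t).hasDerivAt).congr_deriv ?_
    rw [e₁, e₂, binaryPolar_mul_right, binaryPolar_self, binaryPolar_self]
    ring
  have hinv : q t * S t - p t ^ 2 = 1 := by
    rw [binaryQuad_mul_binaryQuad_sub_binaryPolar_sq, hWconst, hABC]
  have hpos : 0 < q t := Real.sqrt_pos.mp ht
  exact ⟨((hq t).sqrt hpos.ne').differentiableAt,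
    (hasDerivAt_deriv_sqrt (Eventually.of_forall hq) hp hpos).differentiableAt,
    ermakovPinney_sqrt (Eventually.of_forall hq) hp hinv hpos⟩

/-- Pinney's solution of the Ermakov–Pinney equation: for two solutions
`v₁, v₂` of `y'' + ω² y = 0` with constant nonzero Wronskian `W` and constants
`A, B, C` with `(A C - B²) W² = 1`, wherever
`ρ := √(A v₁² + 2B v₁ v₂ + C v₂²)` is positive, it is twice differentiable and
satisfies `ρ'' + ω² ρ = 1/ρ³`. -/
theorem stmt0 (ω v₁ v₂ : ℝ → ℝ) (hω : Continuous ω)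
    (hv₁ : Differentiable ℝ v₁) (hv₁' : Differentiable ℝ (deriv v₁))
    (hv₂ : Differentiable ℝ v₂) (hv₂' : Differentiable ℝ (deriv v₂))
    (heq₁ : ∀ t, deriv (deriv v₁) t + ω t ^ 2 * v₁ t = 0)
    (heq₂ : ∀ t, deriv (deriv v₂) t + ω t ^ 2 * v₂ t = 0)
    (W : ℝ) (hW : W ≠ 0)
    (hWconst : ∀ t, v₁ t * deriv v₂ t - deriv v₁ t * v₂ t = W)
    (A B C : ℝ) (hABC : (A * C - B ^ 2) * W ^ 2 = 1)
    (ρ : ℝ → ℝ)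
    (hρ : ∀ t, ρ t = Real.sqrt (A * v₁ t ^ 2 + 2 * B * v₁ t * v₂ t + C * v₂ t ^ 2)) :
    ∀ t, 0 < ρ t →
      DifferentiableAt ℝ ρ t ∧ DifferentiableAt ℝ (deriv ρ) t ∧
        deriv (deriv ρ) t + ω t ^ 2 * ρ t = 1 / ρ t ^ 3 :=
  stmt0_general ω v₁ v₂ hv₁ hv₁' hv₂ hv₂' heq₁ heq₂ W hWconst A B C hABC ρ hρ
end

section
/- Let ω : ℝ → ℝ be continuous, let x : ℝ → ℝ satisfy x'' + ω(t)²·x = 0, and let ρ : ℝ → ℝ be strictly positive and satisfy the Ermakov–Pinney equation ρ'' + ω(t)²·ρ = 1/ρ³. Then the Lewis invariant I(t) = (1/2)·[(ρ(t)·x'(t) − ρ'(t)·x(t))² + (x(t)/ρ(t))²] is constant in t, i.e. I'(t) = 0 for all t. -/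
/-! With `W = ρ x' − ρ' x` one has `W' = ρ x'' − ρ'' x` and `(x/ρ)' = W/ρ²`, so
`I' = W·(ρ x'' − ρ'' x + x/ρ³)`. Subtracting `x` times the Ermakov–Pinney equation from `ρ` times
the oscillator equation eliminates `ω` and gives `ρ x'' − ρ'' x = −x/ρ³`, hence `I' = 0`. -/

section LewisInvariant

variable {x x' ρ ρ' : ℝ → ℝ} {x'' ρ'' t : ℝ}

theorem hasDerivAt_wronskian (hx : HasDerivAt x (x' t) t) (hx' : HasDerivAt x' x'' t)
    (hρ : HasDerivAt ρ (ρ' t) t) (hρ' : HasDerivAt ρ' ρ'' t) :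
    HasDerivAt (fun s => ρ s * x' s - ρ' s * x s) (ρ t * x'' - ρ'' * x t) t :=
  ((hρ.mul hx').sub (hρ'.mul hx)).congr_deriv (by ring)

theorem hasDerivAt_div_eq_wronskian (hx : HasDerivAt x (x' t) t) (hρ : HasDerivAt ρ (ρ' t) t)
    (hρt : ρ t ≠ 0) :
    HasDerivAt (fun s => x s / ρ s) ((ρ t * x' t - ρ' t * x t) / ρ t ^ 2) t :=
  (hx.div hρ hρt).congr_deriv (by ring)

theorem hasDerivAt_lewisInvariant (hx : HasDerivAt x (x' t) t) (hx' : HasDerivAt x' x'' t)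
    (hρ : HasDerivAt ρ (ρ' t) t) (hρ' : HasDerivAt ρ' ρ'' t) (hρt : ρ t ≠ 0) :
    HasDerivAt (fun s => 1 / 2 * ((ρ s * x' s - ρ' s * x s) ^ 2 + (x s / ρ s) ^ 2))
      ((ρ t * x' t - ρ' t * x t) * (ρ t * x'' - ρ'' * x t + x t / ρ t ^ 3)) t :=
  (((hasDerivAt_wronskian hx hx' hρ hρ').pow 2).add
    ((hasDerivAt_div_eq_wronskian hx hρ hρt).pow 2)).const_mul (1 / 2 : ℝ) |>.congr_deriv (by
      simp only [Nat.cast_ofNat, Nat.add_one_sub_one, pow_one]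
      field_simp)

end LewisInvariant

theorem cross_eq_of_oscillator_of_ermakovPinney {x x'' ρ ρ'' ω : ℝ}
    (hx : x'' + ω ^ 2 * x = 0) (hρ : ρ'' + ω ^ 2 * ρ = 1 / ρ ^ 3) :
    ρ * x'' - ρ'' * x = -(x / ρ ^ 3) := by
  linear_combination ρ * hx - x * hρ

theorem stmt1_general (ω x ρ : ℝ → ℝ)
    (hx : Differentiable ℝ x) (hx' : Differentiable ℝ (deriv x))
    (hxeq : ∀ t, deriv (deriv x) t + ω t ^ 2 * x t = 0)
    (hρpos : ∀ t, 0 < ρ t)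
    (hρ : Differentiable ℝ ρ) (hρ' : Differentiable ℝ (deriv ρ))
    (hρeq : ∀ t, deriv (deriv ρ) t + ω t ^ 2 * ρ t = 1 / ρ t ^ 3)
    (I : ℝ → ℝ)
    (hI : ∀ t, I t = (1 / 2) * ((ρ t * deriv x t - deriv ρ t * x t) ^ 2
      + (x t / ρ t) ^ 2)) :
    ∀ t, deriv I t = 0 := by
  intro t
  have hderiv := hasDerivAt_lewisInvariant (hx t).hasDerivAt (hx' t).hasDerivAt
    (hρ t).hasDerivAt (hρ' t).hasDerivAt (hρpos t).ne'
  rw [funext hI, hderiv.deriv, cross_eq_of_oscillator_of_ermakovPinney (hxeq t) (hρeq t)]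
  ring

/-- The Lewis invariant `I = ½[(ρ x' − ρ' x)² + (x/ρ)²]` is constant along
solutions of `x'' + ω² x = 0` when `ρ > 0` solves the Ermakov–Pinney equation
`ρ'' + ω² ρ = 1/ρ³`. -/
theorem stmt1 (ω x ρ : ℝ → ℝ) (hω : Continuous ω)
    (hx : Differentiable ℝ x) (hx' : Differentiable ℝ (deriv x))
    (hxeq : ∀ t, deriv (deriv x) t + ω t ^ 2 * x t = 0)
    (hρpos : ∀ t, 0 < ρ t)
    (hρ : Differentiable ℝ ρ) (hρ' : Differentiable ℝ (deriv ρ))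
    (hρeq : ∀ t, deriv (deriv ρ) t + ω t ^ 2 * ρ t = 1 / ρ t ^ 3)
    (I : ℝ → ℝ)
    (hI : ∀ t, I t = (1 / 2) * ((ρ t * deriv x t - deriv ρ t * x t) ^ 2
      + (x t / ρ t) ^ 2)) :
    ∀ t, deriv I t = 0 :=
  stmt1_general ω x ρ hx hx' hxeq hρpos hρ hρ' hρeq I hI
end

section
/- Let φ₁, φ₂, k ∈ ℝ and let u : ℝ³ → ℝ be a smooth solution of u_xx + u_yy − φ₁u_x − φ₂u_y − 2k·u + 2u_t = 0. Let ε ∈ ℝ. Then ũ(t,x,y) = exp( ε·x + (φ₁/2)·ε·t − (1/2)·ε²·t ) · u(t, x − ε·t, y) is also a smooth solution of the same equation ũ_xx + ũ_yy − φ₁ũ_x − φ₂ũ_y − 2k·ũ + 2ũ_t = 0. -/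
/-- Partial derivative in the first (time) variable. -/
noncomputable def pt (u : ℝ → ℝ → ℝ → ℝ) (t x y : ℝ) : ℝ :=
  deriv (fun s => u s x y) t

/-- Partial derivative in the second variable. -/
noncomputable def px (u : ℝ → ℝ → ℝ → ℝ) (t x y : ℝ) : ℝ :=
  deriv (fun a => u t a y) x

/-- Partial derivative in the third variable. -/
noncomputable def py (u : ℝ → ℝ → ℝ → ℝ) (t x y : ℝ) : ℝ :=
  deriv (fun b => u t x b) y

section Aux

variable {W : ℝ × ℝ × ℝ → ℝ}

lemma sliceT (hW : Differentiable ℝ W) (t x y : ℝ) :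
    HasDerivAt (fun s => W (s, x, y)) (fderiv ℝ W (t, x, y) ((1:ℝ), (0:ℝ), (0:ℝ))) t := by
  have h := (hW (t, x, y)).hasFDerivAt
  have hl : HasDerivAt (fun s : ℝ => ((s, x, y) : ℝ × ℝ × ℝ)) ((1:ℝ), (0:ℝ), (0:ℝ)) t :=
    (hasDerivAt_id t).prodMk ((hasDerivAt_const t x).prodMk (hasDerivAt_const t y))
  exact h.comp_hasDerivAt t hl

lemma sliceX (hW : Differentiable ℝ W) (t x y : ℝ) :
    HasDerivAt (fun a => W (t, a, y)) (fderiv ℝ W (t, x, y) ((0:ℝ), (1:ℝ), (0:ℝ))) x := by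
  have h := (hW (t, x, y)).hasFDerivAt
  have hl : HasDerivAt (fun a : ℝ => ((t, a, y) : ℝ × ℝ × ℝ)) ((0:ℝ), (1:ℝ), (0:ℝ)) x :=
    (hasDerivAt_const x t).prodMk ((hasDerivAt_id x).prodMk (hasDerivAt_const x y))
  exact h.comp_hasDerivAt x hl

lemma sliceY (hW : Differentiable ℝ W) (t x y : ℝ) :
    HasDerivAt (fun b => W (t, x, b)) (fderiv ℝ W (t, x, y) ((0:ℝ), (0:ℝ), (1:ℝ))) y := by
  have h := (hW (t, x, y)).hasFDerivAt
  have hl : HasDerivAt (fun b : ℝ => ((t, x, b) : ℝ × ℝ × ℝ)) ((0:ℝ), (0:ℝ), (1:ℝ)) y :=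
    (hasDerivAt_const y t).prodMk ((hasDerivAt_const y x).prodMk (hasDerivAt_id y))
  exact h.comp_hasDerivAt y hl

lemma sliceXshift (hW : Differentiable ℝ W) (ε t x y : ℝ) :
    HasDerivAt (fun a => W (t, a - ε * t, y))
      (fderiv ℝ W (t, x - ε * t, y) ((0:ℝ), (1:ℝ), (0:ℝ))) x := by
  have h := (hW (t, x - ε * t, y)).hasFDerivAt
  have hl : HasDerivAt (fun a : ℝ => ((t, a - ε * t, y) : ℝ × ℝ × ℝ)) ((0:ℝ), (1:ℝ), (0:ℝ)) x :=
    (hasDerivAt_const x t).prodMk (((hasDerivAt_id x).sub_const (ε * t)).prodMk (hasDerivAt_const x y))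
  exact h.comp_hasDerivAt x hl

lemma sliceDir (hW : Differentiable ℝ W) (ε t x y : ℝ) :
    HasDerivAt (fun s => W (s, x - ε * s, y))
      (fderiv ℝ W (t, x - ε * t, y) ((1:ℝ), -ε, (0:ℝ))) t := by
  have h := (hW (t, x - ε * t, y)).hasFDerivAt
  have hl' := (hasDerivAt_id t).prodMk
    ((((hasDerivAt_id t).const_mul ε).const_sub x).prodMk (hasDerivAt_const t y))
  simp only [mul_one] at hl'
  exact h.comp_hasDerivAt t hl'

lemma fderiv_dir_eq (p : ℝ × ℝ × ℝ) (ε : ℝ) :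
    fderiv ℝ W p ((1:ℝ), -ε, (0:ℝ))
      = fderiv ℝ W p ((1:ℝ), (0:ℝ), (0:ℝ)) - ε * fderiv ℝ W p ((0:ℝ), (1:ℝ), (0:ℝ)) := by
  have hv : ((1:ℝ), -ε, (0:ℝ)) = ((1:ℝ), (0:ℝ), (0:ℝ)) - ε • ((0:ℝ), (1:ℝ), (0:ℝ)) := by
    simp [Prod.ext_iff]
  rw [hv, map_sub, map_smul, smul_eq_mul]

end Aux

noncomputable def Efun (φ₁ ε t x : ℝ) : ℝ :=
  Real.exp (ε * x + (φ₁ / 2) * ε * t - (1 / 2) * ε ^ 2 * t)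

lemma Efun_hasDerivAt_x (φ₁ ε t x : ℝ) :
    HasDerivAt (fun a => Efun φ₁ ε t a) (ε * Efun φ₁ ε t x) x := by
  have h : HasDerivAt (fun a : ℝ => ε * a + (φ₁ / 2) * ε * t - (1 / 2) * ε ^ 2 * t) ε x := by
    simpa using (((hasDerivAt_id x).const_mul ε).add_const ((φ₁ / 2) * ε * t)).sub_const
      ((1 / 2) * ε ^ 2 * t)
  have := h.exp
  unfold Efun
  convert this using 1
  ring

lemma Efun_hasDerivAt_t (φ₁ ε t x : ℝ) :
    HasDerivAt (fun s => Efun φ₁ ε s x)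
      (((φ₁ / 2) * ε - (1 / 2) * ε ^ 2) * Efun φ₁ ε t x) t := by
  have h : HasDerivAt (fun s : ℝ => ε * x + (φ₁ / 2) * ε * s - (1 / 2) * ε ^ 2 * s)
      ((φ₁ / 2) * ε - (1 / 2) * ε ^ 2) t := by
    have h' := ((hasDerivAt_const t (ε * x)).add
      ((hasDerivAt_id t).const_mul ((φ₁ / 2) * ε))).sub ((hasDerivAt_id t).const_mul ((1 / 2) * ε ^ 2))
    simp only [mul_one, zero_add] at h'
    exact h'
  have := h.exp
  unfold Efun
  convert this using 1
  ring

/-- The finite Galilean-boost-type symmetry of the reduced autonomous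
two-dimensional Black–Scholes equation maps solutions to solutions. -/
theorem stmt13 (φ₁ φ₂ k : ℝ) (u : ℝ → ℝ → ℝ → ℝ)
    (hu : ContDiff ℝ (⊤ : ℕ∞) (fun p : ℝ × ℝ × ℝ => u p.1 p.2.1 p.2.2))
    (hueq : ∀ t x y,
      px (px u) t x y + py (py u) t x y - φ₁ * px u t x y - φ₂ * py u t x y
        - 2 * k * u t x y + 2 * pt u t x y = 0)
    (ε : ℝ) (ut : ℝ → ℝ → ℝ → ℝ)
    (hut : ∀ t x y, ut t x y
      = Real.exp (ε * x + (φ₁ / 2) * ε * t - (1 / 2) * ε ^ 2 * t)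
          * u t (x - ε * t) y) :
    ∀ t x y,
      px (px ut) t x y + py (py ut) t x y - φ₁ * px ut t x y - φ₂ * py ut t x y
        - 2 * k * ut t x y + 2 * pt ut t x y = 0 := by
  set U : ℝ × ℝ × ℝ → ℝ := fun p => u p.1 p.2.1 p.2.2 with hUdef
  have hUd : Differentiable ℝ U := hu.differentiable (by simp)
  set g1 : ℝ × ℝ × ℝ → ℝ := fun p => fderiv ℝ U p ((1:ℝ), (0:ℝ), (0:ℝ)) with hg1def
  set g2 : ℝ × ℝ × ℝ → ℝ := fun p => fderiv ℝ U p ((0:ℝ), (1:ℝ), (0:ℝ)) with hg2def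
  set g3 : ℝ × ℝ × ℝ → ℝ := fun p => fderiv ℝ U p ((0:ℝ), (0:ℝ), (1:ℝ)) with hg3def
  have hg2c : ContDiff ℝ (⊤ : ℕ∞) g2 := (hu.fderiv_right (by simp)).clm_apply contDiff_const
  have hg3c : ContDiff ℝ (⊤ : ℕ∞) g3 := (hu.fderiv_right (by simp)).clm_apply contDiff_const
  have hg2d : Differentiable ℝ g2 := hg2c.differentiable (by simp)
  have hg3d : Differentiable ℝ g3 := hg3c.differentiable (by simp)
  set g22 : ℝ × ℝ × ℝ → ℝ := fun p => fderiv ℝ g2 p ((0:ℝ), (1:ℝ), (0:ℝ)) with hg22def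
  set g33 : ℝ × ℝ × ℝ → ℝ := fun p => fderiv ℝ g3 p ((0:ℝ), (0:ℝ), (1:ℝ)) with hg33def
  -- partials of u
  have hpt_u : ∀ t x y, pt u t x y = g1 (t, x, y) := fun t x y => (sliceT hUd t x y).deriv
  have hpx_u : ∀ t x y, px u t x y = g2 (t, x, y) := fun t x y => (sliceX hUd t x y).deriv
  have hpy_u : ∀ t x y, py u t x y = g3 (t, x, y) := fun t x y => (sliceY hUd t x y).deriv
  have hpxx_u : ∀ t x y, px (px u) t x y = g22 (t, x, y) := by
    intro t x y
    have h1 : (fun a => px u t a y) = fun a => g2 (t, a, y) := funext fun a => hpx_u t a y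
    show deriv (fun a => px u t a y) x = _
    rw [h1]
    exact (sliceX hg2d t x y).deriv
  have hpyy_u : ∀ t x y, py (py u) t x y = g33 (t, x, y) := by
    intro t x y
    have h1 : (fun b => py u t x b) = fun b => g3 (t, x, b) := funext fun b => hpy_u t x b
    show deriv (fun b => py u t x b) y = _
    rw [h1]
    exact (sliceY hg3d t x y).deriv
  have hueq' : ∀ t x y : ℝ,
      g22 (t, x, y) + g33 (t, x, y) - φ₁ * g2 (t, x, y) - φ₂ * g3 (t, x, y)
        - 2 * k * U (t, x, y) + 2 * g1 (t, x, y) = 0 := by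
    intro t x y
    have h := hueq t x y
    rwa [hpxx_u, hpyy_u, hpx_u, hpy_u, hpt_u] at h
  -- ut as product
  have hut2 : ∀ t x y, ut t x y = Efun φ₁ ε t x * U (t, x - ε * t, y) := by
    intro t x y
    rw [hut]; rfl
  -- partials of ut
  have hpx_ut : ∀ t x y, px ut t x y
      = Efun φ₁ ε t x * (ε * U (t, x - ε * t, y) + g2 (t, x - ε * t, y)) := by
    intro t x y
    have hU2 := sliceXshift hUd ε t x y
    have h := (Efun_hasDerivAt_x φ₁ ε t x).mul hU2
    have hfun : (fun a => ut t a y) = fun a => Efun φ₁ ε t a * U (t, a - ε * t, y) :=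
      funext fun a => hut2 t a y
    show deriv (fun a => ut t a y) x = _
    erw [hfun, h.deriv]
    ring
  have hpxx_ut : ∀ t x y, px (px ut) t x y
      = Efun φ₁ ε t x * (ε ^ 2 * U (t, x - ε * t, y) + 2 * ε * g2 (t, x - ε * t, y)
          + g22 (t, x - ε * t, y)) := by
    intro t x y
    have hU2 := sliceXshift hUd ε t x y
    have hg2' := sliceXshift hg2d ε t x y
    have h := (Efun_hasDerivAt_x φ₁ ε t x).mul ((hU2.const_mul ε).add hg2')
    have hfun : (fun a => px ut t a y)
        = fun a => Efun φ₁ ε t a * (ε * U (t, a - ε * t, y) + g2 (t, a - ε * t, y)) :=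
      funext fun a => hpx_ut t a y
    show deriv (fun a => px ut t a y) x = _
    erw [hfun, h.deriv]
    simp only [Pi.add_apply]
    ring
  have hpy_ut : ∀ t x y, py ut t x y = Efun φ₁ ε t x * g3 (t, x - ε * t, y) := by
    intro t x y
    have h := (sliceY hUd t (x - ε * t) y).const_mul (Efun φ₁ ε t x)
    have hfun : (fun b => ut t x b) = fun b => Efun φ₁ ε t x * U (t, x - ε * t, b) :=
      funext fun b => hut2 t x b
    show deriv (fun b => ut t x b) y = _
    rw [hfun, h.deriv]
  have hpyy_ut : ∀ t x y, py (py ut) t x y = Efun φ₁ ε t x * g33 (t, x - ε * t, y) := by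
    intro t x y
    have h := (sliceY hg3d t (x - ε * t) y).const_mul (Efun φ₁ ε t x)
    have hfun : (fun b => py ut t x b) = fun b => Efun φ₁ ε t x * g3 (t, x - ε * t, b) :=
      funext fun b => hpy_ut t x b
    show deriv (fun b => py ut t x b) y = _
    rw [hfun, h.deriv]
  have hpt_ut : ∀ t x y, pt ut t x y
      = Efun φ₁ ε t x * (((φ₁ / 2) * ε - (1 / 2) * ε ^ 2) * U (t, x - ε * t, y)
          + g1 (t, x - ε * t, y) - ε * g2 (t, x - ε * t, y)) := by
    intro t x y
    have hU2 := sliceDir hUd ε t x y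
    rw [fderiv_dir_eq] at hU2
    have h := (Efun_hasDerivAt_t φ₁ ε t x).mul hU2
    have hfun : (fun s => ut s x y) = fun s => Efun φ₁ ε s x * U (s, x - ε * s, y) :=
      funext fun s => hut2 s x y
    show deriv (fun s => ut s x y) t = _
    erw [hfun, h.deriv]
    ring
  intro t x y
  rw [hpxx_ut, hpyy_ut, hpx_ut, hpy_ut, hpt_ut, hut2]
  have h0 := hueq' t (x - ε * t) y
  linear_combination Efun φ₁ ε t x * h0
end

section
/- Let p₁, p₂, p₃ ∈ ℝ with p₁ ≠ 0, and let F : ℝ³ → ℝ be a smooth solution of F_xx + F_yy − (p₁x + p₂y + p₃)F_x − 2F_t = 0. Let ε ∈ ℝ. Then G(t,x,y) = F(t, x − ε·e^{p₁t/2}, y) is also a solution of G_xx + G_yy − (p₁x + p₂y + p₃)G_x − 2G_t = 0. -/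
/-- derivative of a differentiable function along a differentiable path -/
lemma deriv_along {Fp : ℝ × ℝ × ℝ → ℝ} (h : Differentiable ℝ Fp)
    {γ : ℝ → ℝ × ℝ × ℝ} {v : ℝ × ℝ × ℝ} {s : ℝ} (hγ : HasDerivAt γ v s) :
    deriv (fun u => Fp (γ u)) s = fderiv ℝ Fp (γ s) v :=
  ((h (γ s)).hasFDerivAt.comp_hasDerivAt s hγ).deriv

/-- The time-dependent translation x ↦ x - ε e^{p₁t/2} maps solutions of the
special-case two-factor commodities equation to solutions. -/
theorem stmt14 (p₁ p₂ p₃ : ℝ) (hp₁ : p₁ ≠ 0) (F : ℝ → ℝ → ℝ → ℝ)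
    (hF : ContDiff ℝ (⊤ : ℕ∞) (fun p : ℝ × ℝ × ℝ => F p.1 p.2.1 p.2.2))
    (hFeq : ∀ t x y,
      px (px F) t x y + py (py F) t x y
        - (p₁ * x + p₂ * y + p₃) * px F t x y - 2 * pt F t x y = 0)
    (ε : ℝ) (G : ℝ → ℝ → ℝ → ℝ)
    (hG : ∀ t x y, G t x y = F t (x - ε * Real.exp (p₁ * t / 2)) y) :
    ∀ t x y,
      px (px G) t x y + py (py G) t x y
        - (p₁ * x + p₂ * y + p₃) * px G t x y - 2 * pt G t x y = 0 := by
  intro t x y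
  set Fp : ℝ × ℝ × ℝ → ℝ := fun p => F p.1 p.2.1 p.2.2 with hFpdef
  have hFd : Differentiable ℝ Fp := hF.differentiable (by simp)
  set c : ℝ → ℝ := fun s => ε * Real.exp (p₁ * s / 2) with hcdef
  have hcd : ∀ s, HasDerivAt c (p₁ * c s / 2) s := by
    intro s
    have h1 : HasDerivAt (fun u : ℝ => p₁ * u / 2) (p₁ / 2) s := by
      simpa using ((hasDerivAt_id s).const_mul p₁).div_const 2
    have h2 := (h1.exp).const_mul ε
    convert h2 using 1
    show p₁ * (ε * Real.exp (p₁ * s / 2)) / 2 = _; ring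
    all_goals rfl
  -- first derivative functions
  set Fp1 : ℝ × ℝ × ℝ → ℝ := fun p => fderiv ℝ Fp p (0, 1, 0) with hFp1def
  set Fp2 : ℝ × ℝ × ℝ → ℝ := fun p => fderiv ℝ Fp p (0, 0, 1) with hFp2def
  have hFp1 : ContDiff ℝ (⊤ : ℕ∞) Fp1 := (hF.fderiv_right (by simp)).clm_apply contDiff_const
  have hFp2 : ContDiff ℝ (⊤ : ℕ∞) Fp2 := (hF.fderiv_right (by simp)).clm_apply contDiff_const
  have hFp1d : Differentiable ℝ Fp1 := hFp1.differentiable (by simp)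
  have hFp2d : Differentiable ℝ Fp2 := hFp2.differentiable (by simp)
  -- straight-line path derivatives
  have lineX : ∀ (t' y' : ℝ) (x' : ℝ),
      HasDerivAt (fun a : ℝ => (t', a, y')) ((0 : ℝ), (1 : ℝ), (0 : ℝ)) x' := by
    intro t' y' x'
    exact HasDerivAt.prodMk (hasDerivAt_const x' t') (HasDerivAt.prodMk (hasDerivAt_id x') (hasDerivAt_const x' y'))
  have lineY : ∀ (t' x' : ℝ) (y' : ℝ),
      HasDerivAt (fun b : ℝ => (t', x', b)) ((0 : ℝ), (0 : ℝ), (1 : ℝ)) y' := by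
    intro t' x' y'
    exact HasDerivAt.prodMk (hasDerivAt_const y' t') (HasDerivAt.prodMk (hasDerivAt_const y' x') (hasDerivAt_id y'))
  have lineT : ∀ (x' y' : ℝ) (t' : ℝ),
      HasDerivAt (fun s : ℝ => (s, x', y')) ((1 : ℝ), (0 : ℝ), (0 : ℝ)) t' := by
    intro x' y' t'
    exact HasDerivAt.prodMk (hasDerivAt_id t') (HasDerivAt.prodMk (hasDerivAt_const t' x') (hasDerivAt_const t' y'))
  -- shifted-line path derivatives (for G)
  have lineXG : ∀ (t' y' : ℝ) (x' : ℝ),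
      HasDerivAt (fun a : ℝ => (t', a - c t', y')) ((0 : ℝ), (1 : ℝ), (0 : ℝ)) x' := by
    intro t' y' x'
    exact HasDerivAt.prodMk (hasDerivAt_const x' t')
      (HasDerivAt.prodMk ((hasDerivAt_id x').sub_const (c t')) (hasDerivAt_const x' y'))
  have pathTG : ∀ (x' y' : ℝ) (t' : ℝ),
      HasDerivAt (fun s : ℝ => (s, x' - c s, y'))
        ((1 : ℝ), -(p₁ * c t' / 2), (0 : ℝ)) t' := by
    intro x' y' t'
    have hsub : HasDerivAt (fun s => x' - c s) (-(p₁ * c t' / 2)) t' := by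
      simpa using (hcd t').const_sub x'
    exact HasDerivAt.prodMk (hasDerivAt_id t') (HasDerivAt.prodMk hsub (hasDerivAt_const t' y'))
  -- px F, py F, pt F in terms of fderiv
  have hpx : ∀ t' x' y', px F t' x' y' = Fp1 (t', x', y') := by
    intro t' x' y'
    exact deriv_along hFd (lineX t' y' x')
  have hpy : ∀ t' x' y', py F t' x' y' = Fp2 (t', x', y') := by
    intro t' x' y'
    exact deriv_along hFd (lineY t' x' y')
  -- second derivatives of F
  have hpxx : ∀ t' x' y', px (px F) t' x' y' = fderiv ℝ Fp1 (t', x', y') (0, 1, 0) := by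
    intro t' x' y'
    have : (fun a => px F t' a y') = fun a => Fp1 (t', a, y') := by
      funext a; exact hpx t' a y'
    rw [px, this]
    exact deriv_along hFp1d (lineX t' y' x')
  have hpyy : ∀ t' x' y', py (py F) t' x' y' = fderiv ℝ Fp2 (t', x', y') (0, 0, 1) := by
    intro t' x' y'
    have : (fun b => py F t' x' b) = fun b => Fp2 (t', x', b) := by
      funext b; exact hpy t' x' b
    rw [py, this]
    exact deriv_along hFp2d (lineY t' x' y')
  -- derivatives of G
  have hGfun : ∀ t' x' y', G t' x' y' = Fp (t', x' - c t', y') := by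
    intro t' x' y'; exact hG t' x' y'
  have hpxG : ∀ t' x' y', px G t' x' y' = px F t' (x' - c t') y' := by
    intro t' x' y'
    have h1 : (fun a => G t' a y') = fun a => Fp (t', a - c t', y') := by
      funext a; exact hGfun t' a y'
    rw [px, h1, deriv_along hFd (lineXG t' y' x'), hpx]
  have hpxxG : px (px G) t x y = px (px F) t (x - c t) y := by
    have h1 : (fun a => px G t a y) = fun a => Fp1 (t, a - c t, y) := by
      funext a; rw [hpxG, hpx]
    rw [px, h1, deriv_along hFp1d (lineXG t y x), hpxx]
  have hpyG : ∀ t' x' y', py G t' x' y' = py F t' (x' - c t') y' := by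
    intro t' x' y'
    have h1 : (fun b => G t' x' b) = fun b => Fp (t', x' - c t', b) := by
      funext b; exact hGfun t' x' b
    rw [py, h1, deriv_along hFd (lineY t' (x' - c t') y'), hpy]
  have hpyyG : py (py G) t x y = py (py F) t (x - c t) y := by
    have h1 : (fun b => py G t x b) = fun b => Fp2 (t, x - c t, b) := by
      funext b; rw [hpyG, hpy]
    rw [py, h1, deriv_along hFp2d (lineY t (x - c t) y), hpyy]
  -- time derivative of G
  have hptF : pt F t (x - c t) y = fderiv ℝ Fp (t, x - c t, y) (1, 0, 0) := by
    rw [pt]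
    exact deriv_along hFd (lineT (x - c t) y t)
  have hptG : pt G t x y = pt F t (x - c t) y - (p₁ * c t / 2) * px F t (x - c t) y := by
    have h1 : (fun s => G s x y) = fun s => Fp (s, x - c s, y) := by
      funext s; exact hGfun s x y
    rw [pt, h1, deriv_along hFd (pathTG x y t), hptF, hpx]
    have hvec : ((1 : ℝ), -(p₁ * c t / 2), (0 : ℝ))
        = ((1 : ℝ), (0 : ℝ), (0 : ℝ)) + (-(p₁ * c t / 2)) • ((0 : ℝ), (1 : ℝ), (0 : ℝ)) := by
      simp [Prod.ext_iff]
    rw [hvec, map_add, map_smul]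
    simp [Fp1]
    ring
  -- conclude
  rw [hpxxG, hpyyG, hpxG, hptG]
  have h := hFeq t (x - c t) y
  linear_combination h
end
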